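/- arXiv:2503.24061 — 2 statements merged into one kernel-verified Lean document; each statement's English description precedes it below -/
import Mathlib

section
/- There exist constants c, d ∈ ℕ such that for every sufficiently large n ∈ ℕ and every real ε ≤ 1/(c log n), there exists an (n, dn, 1/5, ε)-distinguisher of weight at most 1/ε: a binary n × dn matrix D in which every column has Hamming weight at most 1/ε, and such that every x ∈ F_2^n of Hamming weight at least εn satisfies that xD has Hamming weight at least dn/5. -/
open Finset

def chi (a : ZMod 2) : ℤ := if a = 0 then 1 else -1

lemma chi_add (a b : ZMod 2) : chi (a + b) = chi a * chi b := by revert a b; decide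

lemma chi_sum {ι : Type*} (s : Finset ι) (f : ι → ZMod 2) :
    chi (∑ i ∈ s, f i) = ∏ i ∈ s, chi (f i) := by
  induction s using Finset.cons_induction with
  | empty => simp [chi]
  | cons a s ha ih => rw [Finset.sum_cons, Finset.prod_cons, chi_add, ih]

lemma parity_count (n L : ℕ) (x : Fin n → ZMod 2) :
    2 * (({u : Fin L → Fin n | ∑ i, x (u i) = 1} : Finset _).card : ℤ)
      = (n : ℤ) ^ L - ((n : ℤ) - 2 * hammingNorm x) ^ L := by
  classical
  have hv : ∑ v : Fin n, chi (x v) = (n : ℤ) - 2 * hammingNorm x := by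
    have hsplit := Finset.card_filter_add_card_filter_not
      (s := (Finset.univ : Finset (Fin n))) (p := fun v => x v = 0)
    rw [Finset.card_univ, Fintype.card_fin] at hsplit
    have hnorm : hammingNorm x = (Finset.univ.filter (fun v => ¬ (x v = 0))).card := rfl
    simp only [chi]
    rw [Finset.sum_ite (f := fun _ => (1:ℤ)) (g := fun _ => (-1:ℤ))]
    simp only [Finset.sum_const, nsmul_eq_mul, mul_one, mul_neg_one]
    rw [hnorm]
    omega
  have key : ∑ u : Fin L → Fin n, chi (∑ i, x (u i)) = ((n : ℤ) - 2 * hammingNorm x) ^ L := by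
    simp_rw [chi_sum]
    rw [← Fintype.prod_sum (fun _ : Fin L => fun v : Fin n => chi (x v))]
    simp [hv]
  have hsplit2 := Finset.card_filter_add_card_filter_not
    (s := (Finset.univ : Finset (Fin L → Fin n))) (p := fun u => ∑ i, x (u i) = 1)
  rw [Finset.card_univ] at hsplit2
  have hcard : Fintype.card (Fin L → Fin n) = n ^ L := by simp
  have hz : ∀ a : ZMod 2, a ≠ 1 → a = 0 := by decide
  have hchi1 : ∀ u : Fin L → Fin n, (∑ i, x (u i) = 1) → chi (∑ i, x (u i)) = -1 := by
    intro u h; rw [h]; rfl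
  have hchi0 : ∀ u : Fin L → Fin n, ¬(∑ i, x (u i) = 1) → chi (∑ i, x (u i)) = 1 := by
    intro u h; rw [hz _ h]; rfl
  have keysplit : ∑ u : Fin L → Fin n, chi (∑ i, x (u i))
      = (n:ℤ)^L - 2 * (({u : Fin L → Fin n | ∑ i, x (u i) = 1} : Finset _).card : ℤ) := by
    rw [← Finset.sum_filter_add_sum_filter_not Finset.univ (fun u => ∑ i, x (u i) = 1)]
    rw [Finset.sum_congr rfl (fun u hu => hchi1 u (Finset.mem_filter.mp hu).2),
        Finset.sum_congr rfl (fun u hu => hchi0 u (Finset.mem_filter.mp hu).2)]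
    simp only [Finset.sum_const, nsmul_eq_mul, mul_neg_one, mul_one]
    rw [hcard] at hsplit2
    set A := (Finset.univ.filter (fun u : Fin L → Fin n => ∑ i, x (u i) = 1)).card with hA
    set B := (Finset.univ.filter (fun u : Fin L → Fin n => ¬ (∑ i, x (u i) = 1))).card with hB
    have h2 : (A:ℤ) + (B:ℤ) = ((n:ℤ))^L := by exact_mod_cast hsplit2
    linarith
  rw [keysplit] at key
  set G := (Finset.univ.filter (fun u : Fin L → Fin n => ∑ i, x (u i) = 1)).card with hG
  linarith

lemma count_pi {m : ℕ} {α : Type*} [Fintype α] [DecidableEq α] (p : Fin m → α → Prop)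
    [∀ j u, Decidable (p j u)] :
    (Finset.univ.filter (fun t : Fin m → α => ∀ j, p j (t j))).card
      = ∏ j, (Finset.univ.filter (p j)).card := by
  classical
  have h := Fintype.card_congr (Equiv.subtypePiEquivPi (β := fun _ : Fin m => α) (p := p))
  rw [Fintype.card_pi] at h
  simp only [Fintype.card_subtype] at h
  exact h

lemma fiber_count {n m W : ℕ} (x : Fin n → ZMod 2) (S : Finset (Fin m)) :
    (Finset.univ.filter (fun t : Fin m → (Fin W → Fin n) =>
        ∀ j, ((∑ k, x (t j k) = 1) ↔ j ∈ S))).card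
      = (Finset.univ.filter (fun u : Fin W → Fin n => ∑ k, x (u k) = 1)).card ^ S.card
        * (Finset.univ.filter (fun u : Fin W → Fin n => ¬ (∑ k, x (u k) = 1))).card ^ (m - S.card) := by
  classical
  rw [count_pi (p := fun (j : Fin m) (u : Fin W → Fin n) => (∑ k, x (u k) = 1) ↔ j ∈ S)]
  have hpt : ∀ j : Fin m, (Finset.univ.filter (fun u : Fin W → Fin n => (∑ k, x (u k) = 1) ↔ j ∈ S)).card
      = if j ∈ S then (Finset.univ.filter (fun u : Fin W → Fin n => ∑ k, x (u k) = 1)).card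
        else (Finset.univ.filter (fun u : Fin W → Fin n => ¬ (∑ k, x (u k) = 1))).card := by
    intro j
    by_cases hj : j ∈ S <;> simp [hj]
  rw [Finset.prod_congr rfl (fun j _ => hpt j), Finset.prod_ite]
  simp only [Finset.prod_const]
  have h1 : Finset.univ.filter (fun j => j ∈ S) = S := by ext j; simp
  have h2 : Finset.univ.filter (fun j => ¬ j ∈ S) = Sᶜ := by ext j; simp
  rw [h1, h2, Finset.card_compl, Fintype.card_fin]

lemma bad_count (n m W thr : ℕ) (x : Fin n → ZMod 2) :
    (Finset.univ.filter (fun t : Fin m → (Fin W → Fin n) =>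
        (Finset.univ.filter (fun j => ∑ k, x (t j k) = 1)).card < thr)).card
      = ∑ k ∈ Finset.range thr, Nat.choose m k
          * (Finset.univ.filter (fun u : Fin W → Fin n => ∑ k, x (u k) = 1)).card ^ k
          * (Finset.univ.filter (fun u : Fin W → Fin n => ¬ (∑ k, x (u k) = 1))).card ^ (m - k) := by
  classical
  set G := (Finset.univ.filter (fun u : Fin W → Fin n => ∑ k, x (u k) = 1)).card with hG
  set B := (Finset.univ.filter (fun u : Fin W → Fin n => ¬ (∑ k, x (u k) = 1))).card with hB
  set P := (Finset.univ : Finset (Fin m)).powerset.filter (fun S => S.card < thr) with hP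
  set f : (Fin m → (Fin W → Fin n)) → Finset (Fin m) :=
    fun t => Finset.univ.filter (fun j => ∑ k, x (t j k) = 1) with hf
  set Bad := Finset.univ.filter (fun t : Fin m → (Fin W → Fin n) => (f t).card < thr) with hBad
  have hmem : ∀ t ∈ Bad, f t ∈ P := by
    intro t ht
    simp only [hP, Finset.mem_filter, Finset.mem_powerset]
    exact ⟨Finset.subset_univ _, (Finset.mem_filter.mp ht).2⟩
  rw [Finset.card_eq_sum_card_fiberwise hmem]
  have hfiber : ∀ S ∈ P, (Bad.filter (fun t => f t = S)).card = G ^ S.card * B ^ (m - S.card) := by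
    intro S hS
    have hSc : S.card < thr := (Finset.mem_filter.mp hS).2
    have : Bad.filter (fun t => f t = S) = Finset.univ.filter (fun t => f t = S) := by
      ext t
      simp only [hBad, Finset.mem_filter, Finset.mem_univ, true_and]
      constructor
      · exact fun h => h.2
      · exact fun h => ⟨by rw [h]; exact hSc, h⟩
    rw [this]
    have heq : ∀ t : Fin m → (Fin W → Fin n), f t = S ↔ ∀ j, ((∑ k, x (t j k) = 1) ↔ j ∈ S) := by
      intro t
      rw [Finset.ext_iff]
      simp only [hf, Finset.mem_filter, Finset.mem_univ, true_and]
    rw [Finset.filter_congr (fun t _ => by rw [heq t])]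
    exact fiber_count x S
  rw [Finset.sum_congr rfl hfiber]
  have hPU : P = (Finset.range thr).biUnion (fun k => Finset.powersetCard k (Finset.univ : Finset (Fin m))) := by
    ext S
    simp only [hP, Finset.mem_filter, Finset.mem_powerset, Finset.mem_biUnion, Finset.mem_range,
      Finset.mem_powersetCard_univ]
    constructor
    · rintro ⟨-, h⟩; exact ⟨S.card, h, rfl⟩
    · rintro ⟨k, hk, rfl⟩; exact ⟨Finset.subset_univ _, hk⟩
  rw [hPU, Finset.sum_biUnion]
  · refine Finset.sum_congr rfl (fun k hk => ?_)
    rw [Finset.sum_congr rfl (fun S hS => by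
      rw [Finset.mem_powersetCard_univ.mp hS]), Finset.sum_const,
      Finset.card_powersetCard, Finset.card_univ, Fintype.card_fin, smul_eq_mul, mul_assoc]
  · intro a ha b hb hab
    apply Finset.disjoint_left.mpr
    intro S hSa hSb
    exact hab (by rw [← Finset.mem_powersetCard_univ.mp hSa, Finset.mem_powersetCard_univ.mp hSb])

lemma numeric_key : 167 ^ 40 ≤ 2 ^ 31 * 100 ^ 40 := by norm_num

lemma chernoff_bound (n G B N0 : ℕ) (hN0 : 1 ≤ N0) (hGB : G + B = N0) (hG : 33 * N0 ≤ 100 * G) :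
    2 ^ n * ∑ k ∈ Finset.range (8 * n), Nat.choose (40 * n) k * G ^ k * B ^ (40 * n - k)
      < N0 ^ (40 * n) := by
  set m := 40 * n with hm
  set T := ∑ k ∈ Finset.range (8 * n), Nat.choose m k * G ^ k * B ^ (m - k) with hT
  set C := 2 ^ (32 * n + 1) * 100 ^ m with hC
  have hCpos : 0 < C := by positivity
  have h1 : T * 2 ^ (32 * n + 1) ≤ ∑ k ∈ Finset.range (8 * n), G ^ k * (2 * B) ^ (m - k) * Nat.choose m k := by
    rw [Finset.sum_mul]
    apply Finset.sum_le_sum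
    intro k hk
    have hk8 : k < 8 * n := Finset.mem_range.mp hk
    have hle : 32 * n + 1 ≤ m - k := by omega
    calc Nat.choose m k * G ^ k * B ^ (m - k) * 2 ^ (32 * n + 1)
        ≤ Nat.choose m k * G ^ k * B ^ (m - k) * 2 ^ (m - k) :=
          Nat.mul_le_mul_left _ (Nat.pow_le_pow_right (by norm_num) hle)
      _ = G ^ k * (2 * B) ^ (m - k) * Nat.choose m k := by rw [mul_pow]; ring
  have h2 : ∑ k ∈ Finset.range (8 * n), G ^ k * (2 * B) ^ (m - k) * Nat.choose m k
      ≤ (G + 2 * B) ^ m := by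
    rw [add_pow]
    apply Finset.sum_le_sum_of_subset
    intro k hk
    simp only [Finset.mem_range] at *
    omega
  have h3 : (100 * (G + 2 * B)) ^ m ≤ (167 * N0) ^ m := by
    apply Nat.pow_le_pow_left
    omega
  have h4 : 2 ^ n * T * C ≤ 2 ^ n * (167 ^ m * N0 ^ m) := by
    calc 2 ^ n * T * C = 2 ^ n * ((T * 2 ^ (32 * n + 1)) * 100 ^ m) := by rw [hC]; ring
      _ ≤ 2 ^ n * ((G + 2 * B) ^ m * 100 ^ m) := by
          apply Nat.mul_le_mul_left
          exact Nat.mul_le_mul_right _ (le_trans h1 h2)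
      _ = 2 ^ n * (100 * (G + 2 * B)) ^ m := by rw [mul_pow]; ring
      _ ≤ 2 ^ n * (167 ^ m * N0 ^ m) := by rw [← mul_pow]; exact Nat.mul_le_mul_left _ h3
  have h5 : 2 ^ n * (167 ^ m * N0 ^ m) < N0 ^ m * C := by
    rw [hC]
    have hkey : (167 : ℕ) ^ m ≤ 2 ^ (31 * n) * 100 ^ m := by
      calc (167 : ℕ) ^ m = (167 ^ 40) ^ n := by rw [hm, pow_mul]
        _ ≤ (2 ^ 31 * 100 ^ 40) ^ n := Nat.pow_le_pow_left numeric_key n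
        _ = 2 ^ (31 * n) * 100 ^ m := by
            rw [mul_pow, ← pow_mul, ← pow_mul, hm]
    have hpow : (2:ℕ) ^ (32 * n) < 2 ^ (32 * n + 1) := Nat.pow_lt_pow_right one_lt_two (by omega)
    calc 2 ^ n * (167 ^ m * N0 ^ m) ≤ 2 ^ n * ((2 ^ (31 * n) * 100 ^ m) * N0 ^ m) :=
          Nat.mul_le_mul_left _ (Nat.mul_le_mul_right _ hkey)
      _ = N0 ^ m * (2 ^ (32 * n) * 100 ^ m) := by
          rw [show 32 * n = n + 31 * n by ring, pow_add]; ring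
      _ < N0 ^ m * (2 ^ (32 * n + 1) * 100 ^ m) := by
          apply mul_lt_mul_of_pos_left _ (show 0 < N0 ^ m by positivity)
          exact mul_lt_mul_of_pos_right hpow (by positivity)
      _ = N0 ^ m * C := rfl
  have := lt_of_le_of_lt h4 h5
  exact Nat.lt_of_mul_lt_mul_right this

lemma bernoulli_nat (a b k : ℕ) : a ^ (k+1) + (k+1) * a ^ k * b ≤ (a + b) ^ (k+1) := by
  induction k with
  | zero => simp [pow_succ]
  | succ k ih =>
    have h : (a ^ (k+1) + (k+1) * a ^ k * b) * (a + b) ≤ (a + b) ^ (k+1) * (a + b) :=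
      Nat.mul_le_mul_right _ ih
    calc a ^ (k+2) + (k+2) * a ^ (k+1) * b
        ≤ (a ^ (k+1) + (k+1) * a ^ k * b) * (a + b) := by
          have hid : (a ^ (k+1) + (k+1) * a ^ k * b) * (a + b)
              = a ^ (k+2) + (k+2) * a ^ (k+1) * b + (k+1) * a ^ k * b ^ 2 := by ring
          rw [hid]; exact Nat.le_add_right _ _
      _ ≤ (a + b) ^ (k+1) * (a + b) := h
      _ = (a + b) ^ (k+2) := by ring

lemma G_lb (n W w G : ℕ) (hn : 0 < n) (hWodd : Odd W) (hW1 : 1 ≤ W)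
    (hkey : 50 * n ≤ 17 * (n + 2 * w * W))
    (hparity : 2 * (G:ℤ) = (n:ℤ) ^ W - ((n:ℤ) - 2 * w) ^ W) :
    33 * n ^ W ≤ 100 * G := by
  by_cases hcase : 2 * w ≤ n
  · -- small-weight case
    set a := n - 2 * w with ha
    have hacast : ((n:ℤ) - 2 * w) = (a : ℤ) := by rw [ha]; push_cast [Nat.cast_sub hcase]; ring
    rw [hacast] at hparity
    have haZ : ((n:ℤ) - 2*w)^W = ((a^W : ℕ) : ℤ) := by rw [hacast]; push_cast; ring
    -- show 50 * a^W ≤ 17 * n^W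
    obtain ⟨k, hk⟩ : ∃ k, W = k + 1 := ⟨W - 1, by omega⟩
    have hstep1 : n ^ k * (n + 2 * w * W) ≤ (n + 2 * w) ^ W := by
      rw [hk]
      calc n ^ k * (n + 2 * w * (k+1)) = n ^ (k+1) + (k+1) * n ^ k * (2*w) := by ring
        _ ≤ (n + 2*w) ^ (k+1) := bernoulli_nat n (2*w) k
    obtain hab : a + 2 * w = n := Nat.sub_add_cancel hcase
    have hstep2 : a ^ W * (n + 2 * w) ^ W ≤ n ^ (2 * W) := by
      rw [← mul_pow, pow_mul]
      apply Nat.pow_le_pow_left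
      rw [← hab]
      nlinarith []
    have hchain : 50 * (a ^ W * n ^ W) ≤ 17 * (n ^ W * n ^ W) := by
      calc 50 * (a ^ W * n ^ W) = a ^ W * n ^ k * (50 * n) := by
            rw [hk]; ring
        _ ≤ a ^ W * n ^ k * (17 * (n + 2 * w * W)) := Nat.mul_le_mul_left _ hkey
        _ = 17 * (a ^ W * (n ^ k * (n + 2 * w * W))) := by ring
        _ ≤ 17 * (a ^ W * (n + 2 * w) ^ W) := by
            apply Nat.mul_le_mul_left
            exact Nat.mul_le_mul_left _ hstep1
        _ ≤ 17 * n ^ (2 * W) := Nat.mul_le_mul_left _ hstep2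
        _ = 17 * (n ^ W * n ^ W) := by rw [two_mul, pow_add]
    have hnW : 0 < n ^ W := by positivity
    have h50 : 50 * a ^ W ≤ 17 * n ^ W := by
      have := hchain
      rw [show 50 * (a ^ W * n ^ W) = (50 * a ^ W) * n ^ W by ring,
          show 17 * (n ^ W * n ^ W) = (17 * n ^ W) * n ^ W by ring] at this
      exact Nat.le_of_mul_le_mul_right this hnW
    -- combine with parity
    have hpar2 : 2 * (G:ℤ) = ((n ^ W : ℕ) : ℤ) - ((a ^ W : ℕ) : ℤ) := by
      push_cast
      exact hparity
    omega
  · -- large-weight case: (n - 2w)^W ≤ 0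
    have hneg : ((n:ℤ) - 2 * w) ≤ 0 := by
      have : (n:ℤ) < 2 * w := by exact_mod_cast Nat.lt_of_not_le hcase |>.trans_le (le_refl _)
      omega
    have hA : ((n:ℤ) - 2 * w) ^ W ≤ 0 := hWodd.pow_nonpos hneg
    have hpow : ((n ^ W : ℕ) : ℤ) = (n:ℤ) ^ W := by push_cast; ring
    have : ((n ^ W : ℕ) : ℤ) ≤ 2 * (G:ℤ) := by rw [hpow, hparity]; omega
    omega

/-- there are constants `c, d ∈ ℕ` such that for every sufficiently large `n`
and every real `0 < ε ≤ 1/(c log n)` there is an `(n, dn, 1/5, ε)`-distinguisher of weight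
at most `1/ε`: a binary `n × dn` matrix `D` each of whose columns has Hamming weight at most
`1/ε`, such that every `x ∈ F_2^n` of Hamming weight at least `εn` satisfies
`Hw(xD) ≥ dn/5`. -/
theorem stmt7 :
    ∃ c d : ℕ, 0 < c ∧ 0 < d ∧ ∃ N : ℕ, ∀ n : ℕ, N ≤ n → ∀ ε : ℝ, 0 < ε →
      ε ≤ 1 / (c * Real.logb 2 n) →
      ∃ D : Matrix (Fin n) (Fin (d * n)) (ZMod 2),
        (∀ j, (hammingNorm (fun i => D i j) : ℝ) ≤ 1 / ε) ∧
        (∀ x : Fin n → ZMod 2, ε * n ≤ hammingNorm x →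
          ((d * n : ℕ) : ℝ) / 5 ≤ hammingNorm (Matrix.vecMul x D)) := by
  classical
  refine ⟨1, 40, one_pos, by norm_num, 2 ^ 10000, fun n hn ε hε hεle => ?_⟩
  have hn1 : 1 ≤ n := le_trans (Nat.one_le_two_pow) hn
  have hn0 : 0 < n := hn1
  have hnR : (1:ℝ) ≤ (n:ℝ) := by exact_mod_cast hn1
  -- log bound
  have hlogn : (10000:ℝ) ≤ Real.logb 2 (n:ℝ) := by
    rw [Real.le_logb_iff_rpow_le (by norm_num) (by positivity)]
    have : ((2:ℝ) ^ (10000:ℕ)) ≤ (n:ℝ) := by exact_mod_cast hn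
    calc (2:ℝ) ^ (10000:ℝ) = (2:ℝ) ^ (10000:ℕ) := by
          rw [← Real.rpow_natCast 2 10000]; norm_num
      _ ≤ (n:ℝ) := this
  have hε4 : ε ≤ 1 / 10000 := by
    refine le_trans hεle ?_
    rw [Nat.cast_one, one_mul]
    exact one_div_le_one_div_of_le (by norm_num) hlogn
  clear hn hεle
  have hinv : (10000:ℝ) ≤ 1 / ε := by
    have h := one_div_le_one_div_of_le hε hε4
    norm_num at h
    rw [one_div]
    exact h
  -- choose W
  set M := ⌊1 / ε⌋₊ with hMdef
  have hM : 10000 ≤ M := Nat.le_floor hinv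
  set W := if M % 2 = 0 then M - 1 else M with hWdef
  have hWM : W ≤ M := by rw [hWdef]; split <;> omega
  have hWge : M - 1 ≤ W := by rw [hWdef]; split <;> omega
  have hWodd : Odd W := by rw [Nat.odd_iff, hWdef]; split <;> omega
  have hW1 : 1 ≤ W := by omega
  have hWle : (W:ℝ) ≤ 1 / ε := by
    calc (W:ℝ) ≤ M := by exact_mod_cast hWM
      _ ≤ 1 / ε := Nat.floor_le (by positivity)
  have hWge' : 1 / ε - 2 ≤ (W:ℝ) := by
    have h1 : (1:ℝ) / ε < M + 1 := Nat.lt_floor_add_one _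
    have h2 : (M:ℝ) - 1 ≤ W := by
      have : ((M - 1 : ℕ):ℝ) ≤ W := by exact_mod_cast hWge
      have hM1 : (1:ℕ) ≤ M := by omega
      rw [Nat.cast_sub hM1] at this
      exact_mod_cast this
    linarith
  -- the t-space
  set m := 40 * n with hmdef
  -- bad set of t's
  set BadT : (Fin n → ZMod 2) → Finset (Fin m → (Fin W → Fin n)) := fun x =>
    Finset.univ.filter (fun t => (Finset.univ.filter (fun j => ∑ k, x (t j k) = 1)).card < 8 * n)
    with hBadT
  set X : Finset (Fin n → ZMod 2) :=
    Finset.univ.filter (fun x => ε * n ≤ (hammingNorm x : ℝ)) with hX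
  set F : Finset (Fin m → (Fin W → Fin n)) :=
    Finset.univ.filter (fun t => ∃ x : Fin n → ZMod 2,
      (ε * n ≤ (hammingNorm x : ℝ)) ∧ t ∈ BadT x) with hF
  -- per-x bound
  have hperx : ∀ x ∈ X, 2 ^ n * (BadT x).card < (n ^ W) ^ m := by
    intro x hx
    have hwx : ε * n ≤ (hammingNorm x : ℝ) := (Finset.mem_filter.mp hx).2
    set w := hammingNorm x with hwdef
    -- key inequality
    have hwR : (0:ℝ) ≤ w := Nat.cast_nonneg _
    have hWposR : (0:ℝ) ≤ 1 / ε - 2 := by linarith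
    have hwW : (n:ℝ) * (1 - 2 * ε) ≤ (w:ℝ) * W := by
      have h1 : (ε * n) * (1 / ε - 2) ≤ (w:ℝ) * W :=
        mul_le_mul hwx hWge' hWposR hwR
      have h2 : (ε * n) * (1 / ε - 2) = (n:ℝ) * (1 - 2 * ε) := by
        field_simp
      linarith
    have hkeyR : (50:ℝ) * n ≤ 17 * (n + 2 * (w * W)) := by
      have hεn : ε * n ≤ n * (1/10000) := by
        have := mul_le_mul_of_nonneg_right hε4 (show (0:ℝ) ≤ n by positivity)
        linarith [this]
      nlinarith [hwW, hεn]
    have hkeyN : 50 * n ≤ 17 * (n + 2 * w * W) := by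
      have : (50 * n : ℝ) ≤ ((17 * (n + 2 * w * W) : ℕ) : ℝ) := by push_cast; linarith
      exact_mod_cast this
    -- G bound
    set G := (Finset.univ.filter (fun u : Fin W → Fin n => ∑ k, x (u k) = 1)).card with hG
    set B := (Finset.univ.filter (fun u : Fin W → Fin n => ¬ (∑ k, x (u k) = 1))).card with hB
    have hpar := parity_count n W x
    have hGlb : 33 * n ^ W ≤ 100 * G := G_lb n W w G hn0 hWodd hW1 hkeyN (by rw [hG]; exact_mod_cast hpar)
    have hGB : G + B = n ^ W := by
      have := Finset.card_filter_add_card_filter_not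
        (s := (Finset.univ : Finset (Fin W → Fin n))) (p := fun u => ∑ k, x (u k) = 1)
      rw [Finset.card_univ] at this
      simpa using this
    have hbc := bad_count n m W (8 * n) x
    rw [hbc]
    rw [hmdef]
    exact chernoff_bound n G B (n ^ W) (Nat.one_le_pow _ _ hn0) hGB hGlb
  -- total count
  have hFlt : F.card < (n ^ W) ^ m := by
    have hsub : F ⊆ X.biUnion BadT := by
      intro t ht
      obtain ⟨x, hx1, hx2⟩ := (Finset.mem_filter.mp ht).2
      exact Finset.mem_biUnion.mpr ⟨x, Finset.mem_filter.mpr ⟨Finset.mem_univ _, hx1⟩, hx2⟩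
    have hcard1 : F.card ≤ ∑ x ∈ X, (BadT x).card :=
      le_trans (Finset.card_le_card hsub) (Finset.card_biUnion_le)
    rcases X.eq_empty_or_nonempty with hXe | hXne
    · rw [hXe] at hcard1
      simp at hcard1
      rw [hcard1]
      positivity
    · obtain ⟨x0, hx0X, hx0max⟩ := Finset.exists_max_image X (fun x => (BadT x).card) hXne
      have hXcard : X.card ≤ 2 ^ n := by
        calc X.card ≤ Fintype.card (Fin n → ZMod 2) := Finset.card_le_univ X
          _ = 2 ^ n := by simp
      calc F.card ≤ ∑ x ∈ X, (BadT x).card := hcard1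
        _ ≤ X.card * (BadT x0).card := by
            rw [← smul_eq_mul]
            exact Finset.sum_le_card_nsmul X _ _ (fun x hx => hx0max x hx)
        _ ≤ 2 ^ n * (BadT x0).card := Nat.mul_le_mul_right _ hXcard
        _ < (n ^ W) ^ m := hperx x0 hx0X
  -- extract a good t
  have hexists : ∃ t : Fin m → (Fin W → Fin n), t ∉ F := by
    by_contra hcon
    push_neg at hcon
    have : F = Finset.univ := Finset.eq_univ_iff_forall.mpr hcon
    rw [this, Finset.card_univ] at hFlt
    have : Fintype.card (Fin m → (Fin W → Fin n)) = (n ^ W) ^ m := by simp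
    omega
  obtain ⟨t, ht⟩ := hexists
  have htgood : ∀ x : Fin n → ZMod 2, ε * n ≤ (hammingNorm x : ℝ) →
      8 * n ≤ (Finset.univ.filter (fun j => ∑ k, x (t j k) = 1)).card := by
    intro x hx
    by_contra hcon
    push_neg at hcon
    apply ht
    rw [hF, Finset.mem_filter]
    exact ⟨Finset.mem_univ _, x, hx, by rw [hBadT, Finset.mem_filter]; exact ⟨Finset.mem_univ _, hcon⟩⟩
  -- build the matrix
  refine ⟨fun i j => ∑ k : Fin W, if t j k = i then (1 : ZMod 2) else 0, ?_, ?_⟩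
  · -- column weight
    intro j
    have hsub : Finset.univ.filter
        (fun i => (∑ k : Fin W, if t j k = i then (1 : ZMod 2) else 0) ≠ 0)
          ⊆ Finset.univ.image (t j) := by
      intro i hi
      by_contra hni
      have : ∀ k : Fin W, ¬ (t j k = i) := by
        intro k hk
        exact hni (Finset.mem_image.mpr ⟨k, Finset.mem_univ _, hk⟩)
      have hz : (∑ k : Fin W, if t j k = i then (1 : ZMod 2) else 0) = 0 := by
        apply Finset.sum_eq_zero
        intro k _
        simp [this k]
      exact (Finset.mem_filter.mp hi).2 hz
    have hcw : hammingNorm (fun i => ∑ k : Fin W, if t j k = i then (1 : ZMod 2) else 0) ≤ W := by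
      calc hammingNorm _ ≤ (Finset.univ.image (t j)).card := Finset.card_le_card hsub
        _ ≤ (Finset.univ : Finset (Fin W)).card := Finset.card_image_le
        _ = W := by simp
    calc (hammingNorm (fun i => ∑ k : Fin W, if t j k = i then (1 : ZMod 2) else 0) : ℝ)
        ≤ (W : ℝ) := by exact_mod_cast hcw
      _ ≤ 1 / ε := hWle
  · -- distinguishing
    intro x hx
    have hcount := htgood x hx
    have hne : ∀ a : ZMod 2, a ≠ 0 ↔ a = 1 := by decide
    have hvm : ∀ j, Matrix.vecMul x (fun i j => ∑ k : Fin W, if t j k = i then (1 : ZMod 2) else 0) j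
        = ∑ k, x (t j k) := by
      intro j
      change ∑ i, x i * (∑ k : Fin W, if t j k = i then (1 : ZMod 2) else 0) = ∑ k, x (t j k)
      calc ∑ i, x i * ∑ k : Fin W, (if t j k = i then (1 : ZMod 2) else 0)
          = ∑ i, ∑ k : Fin W, (if t j k = i then x i else 0) := by
            refine Finset.sum_congr rfl (fun i _ => ?_)
            rw [Finset.mul_sum]
            exact Finset.sum_congr rfl (fun k _ => by split <;> simp)
        _ = ∑ k : Fin W, ∑ i, (if t j k = i then x i else 0) := Finset.sum_comm
        _ = ∑ k, x (t j k) := by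
            refine Finset.sum_congr rfl (fun k _ => ?_)
            simp
    have hset : Finset.univ.filter (fun j => Matrix.vecMul x
          (fun i j => ∑ k : Fin W, if t j k = i then (1 : ZMod 2) else 0) j ≠ 0)
        = Finset.univ.filter (fun j => ∑ k, x (t j k) = 1) := by
      apply Finset.filter_congr
      intro j _
      rw [hvm j]
      exact hne _
    have hfin : 8 * n ≤ hammingNorm (Matrix.vecMul x
        (fun i j => ∑ k : Fin W, if t j k = i then (1 : ZMod 2) else 0)) := by
      rw [hammingNorm, hset]
      exact hcount
    have hcast : ((8 * n : ℕ) : ℝ) ≤ (hammingNorm (Matrix.vecMul x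
        (fun i j => ∑ k : Fin W, if t j k = i then (1 : ZMod 2) else 0)) : ℝ) := by
      exact_mod_cast hfin
    show ((40 * n : ℕ) : ℝ) / 5 ≤ _
    push_cast at hcast ⊢
    linarith
end

section
/- If Q ⊆ {0,1}* is 2^{q(n)}-sparse with q(n) = n^γ for a real γ with 0 < γ < 1, and n^{−ε}-Q denotes the promise problem with YES instances Q and NO instances the x with d_H(x,y) ≥ n^{1−ε} for all y ∈ Q of length n, then for r(n) := 17⌈n^γ⌉, δ := 1/8, and any (n,m,1/8,n^{−ε})-distinguisher D, the kernel fingerprinting with r(n) independent uniform coordinates maps NO instances to fingerprints that collide with a YES-instance fingerprint with probability at most 2^{n^γ}(7/8)^{17⌈n^γ⌉} ≤ 2^{−n^γ} for sufficiently large n. -/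
/-- let `Q` be `2^{n^γ}`-sparse (`0 < γ < 1`) and let `D` be an
`(n,m,1/8,n^{−ε})`-distinguisher.  With `r := 17⌈n^γ⌉` independent uniform coordinates
`u ∈ [m]^r`, every NO instance `x` of `n^{−ε}`-`Q` (i.e. `d_H(x,y) ≥ n^{1−ε}` for all
`y ∈ Q ∩ {0,1}^n`) has a fingerprint `k(x,u) = (n,u,(xD)_{u_1},…,(xD)_{u_r})` colliding with
the fingerprint of some YES instance `y ∈ Q` with probability at most
`2^{n^γ}(7/8)^{17⌈n^γ⌉} ≤ 2^{−n^γ}`, for sufficiently large `n` (the probability is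
expressed by counting the `u ∈ [m]^r` producing a collision). -/
theorem stmt17 (γ ε : ℝ) (hγ0 : 0 < γ) (hγ1 : γ < 1) (hε : 0 < ε) :
    ∃ N : ℕ, ∀ n : ℕ, N ≤ n → ∀ m : ℕ,
      ∀ D : Matrix (Fin n) (Fin m) (ZMod 2),
      (∀ x y : Fin n → ZMod 2, (n : ℝ) ^ (1 - ε) ≤ hammingDist x y →
          (1 / 8 : ℝ) * m ≤ hammingDist (Matrix.vecMul x D) (Matrix.vecMul y D)) →
      ∀ Q : Finset (Fin n → ZMod 2), (Q.card : ℝ) ≤ (2 : ℝ) ^ ((n : ℝ) ^ γ) →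
      ∀ x : Fin n → ZMod 2, (∀ y ∈ Q, (n : ℝ) ^ (1 - ε) ≤ hammingDist x y) →
      (((Finset.univ.filter (fun u : Fin (17 * ⌈(n : ℝ) ^ γ⌉₊) → Fin m =>
          ∃ y ∈ Q, ∀ j, Matrix.vecMul y D (u j) = Matrix.vecMul x D (u j))).card : ℝ)
        ≤ (2 : ℝ) ^ ((n : ℝ) ^ γ) * (7 / 8 : ℝ) ^ (17 * ⌈(n : ℝ) ^ γ⌉₊)
            * (m : ℝ) ^ (17 * ⌈(n : ℝ) ^ γ⌉₊)) ∧
      (2 : ℝ) ^ ((n : ℝ) ^ γ) * (7 / 8 : ℝ) ^ (17 * ⌈(n : ℝ) ^ γ⌉₊)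
        ≤ (2 : ℝ) ^ (-((n : ℝ) ^ γ)) := by
  refine ⟨1, fun n hn m D hD Q hQ x hx => ?_⟩
  set a : ℝ := (n : ℝ) ^ γ with ha
  set r : ℕ := 17 * ⌈a⌉₊ with hr
  have ha0 : 0 < a := Real.rpow_pos_of_pos (by exact_mod_cast hn) γ
  constructor
  · -- counting part
    set A : (Fin n → ZMod 2) → Finset (Fin m) := fun y =>
      Finset.univ.filter (fun i => Matrix.vecMul y D i = Matrix.vecMul x D i) with hA
    have hsub : (Finset.univ.filter (fun u : Fin r → Fin m =>
        ∃ y ∈ Q, ∀ j, Matrix.vecMul y D (u j) = Matrix.vecMul x D (u j)))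
        ⊆ Q.biUnion (fun y => Fintype.piFinset (fun _ : Fin r => A y)) := by
      intro u hu
      simp only [Finset.mem_filter, Finset.mem_univ, true_and] at hu
      obtain ⟨y, hyQ, hy⟩ := hu
      refine Finset.mem_biUnion.2 ⟨y, hyQ, ?_⟩
      rw [Fintype.mem_piFinset]
      intro j
      simp [hA, hy j]
    have hcard : ∀ y ∈ Q, ((A y).card : ℝ) ≤ 7 / 8 * m := by
      intro y hyQ
      have hdist := hD x y (hx y hyQ)
      have hsum : (A y).card + hammingDist (Matrix.vecMul y D) (Matrix.vecMul x D) = m := by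
        have := Finset.card_filter_add_card_filter_not
          (s := (Finset.univ : Finset (Fin m)))
          (p := fun i => Matrix.vecMul y D i = Matrix.vecMul x D i)
        simpa [hA, hammingDist, Ne] using this
      have hdist' : (1 / 8 : ℝ) * m ≤
          (hammingDist (Matrix.vecMul y D) (Matrix.vecMul x D) : ℝ) := by
        rwa [hammingDist_comm]
      have := congrArg (fun k : ℕ => (k : ℝ)) hsum
      push_cast at this
      linarith
    calc
      (((Finset.univ.filter (fun u : Fin r → Fin m =>
          ∃ y ∈ Q, ∀ j, Matrix.vecMul y D (u j) = Matrix.vecMul x D (u j))).card : ℝ))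
          ≤ ((Q.biUnion (fun y => Fintype.piFinset (fun _ : Fin r => A y))).card : ℝ) := by
            exact_mod_cast Finset.card_le_card hsub
      _ ≤ ((∑ y ∈ Q, (Fintype.piFinset (fun _ : Fin r => A y)).card : ℕ) : ℝ) := by
            exact_mod_cast Finset.card_biUnion_le
      _ = ∑ y ∈ Q, ((A y).card : ℝ) ^ r := by
            push_cast
            refine Finset.sum_congr rfl fun y _ => ?_
            rw [Fintype.card_piFinset]
            simp
      _ ≤ ∑ y ∈ Q, (7 / 8 * (m : ℝ)) ^ r := by
            refine Finset.sum_le_sum fun y hy => ?_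
            exact pow_le_pow_left₀ (by positivity) (hcard y hy) r
      _ = Q.card * ((7 / 8 : ℝ) * m) ^ r := by
            rw [Finset.sum_const, nsmul_eq_mul]
      _ ≤ (2 : ℝ) ^ a * ((7 / 8 : ℝ) * m) ^ r := by
            exact mul_le_mul_of_nonneg_right hQ (by positivity)
      _ = (2 : ℝ) ^ a * (7 / 8 : ℝ) ^ r * (m : ℝ) ^ r := by
            rw [mul_pow]; ring
  · -- analytic part
    have hta : a ≤ (⌈a⌉₊ : ℝ) := Nat.le_ceil a
    have h78 : ((7 : ℝ) / 8) ^ r ≤ (2 : ℝ) ^ (-(2 * (⌈a⌉₊ : ℝ))) := by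
      have h1 : ((7 : ℝ) / 8) ^ r = (((7 : ℝ) / 8) ^ 17) ^ (⌈a⌉₊ : ℕ) := by
        rw [← pow_mul]
      have h2 : (((7 : ℝ) / 8) ^ 17 : ℝ) ≤ (1 / 4 : ℝ) := by norm_num
      have h3 : ((7 : ℝ) / 8) ^ r ≤ ((1 : ℝ) / 4) ^ (⌈a⌉₊ : ℕ) := by
        rw [h1]; exact pow_le_pow_left₀ (by positivity) h2 _
      have h4 : ((1 : ℝ) / 4) ^ (⌈a⌉₊ : ℕ) = (2 : ℝ) ^ (-(2 * (⌈a⌉₊ : ℝ))) := by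
        rw [show (-(2 * (⌈a⌉₊ : ℝ))) = ((-2 : ℝ)) * (⌈a⌉₊ : ℝ) by ring,
          Real.rpow_mul (by norm_num), Real.rpow_natCast]
        norm_num
      rw [← h4]; exact h3
    have key : (2 : ℝ) ^ a * (7 / 8 : ℝ) ^ r ≤ (2 : ℝ) ^ a * (2 : ℝ) ^ (-(2 * (⌈a⌉₊ : ℝ))) :=
      mul_le_mul_of_nonneg_left h78 (by positivity)
    refine key.trans ?_
    rw [← Real.rpow_add (by norm_num)]
    refine Real.rpow_le_rpow_of_exponent_le (by norm_num) ?_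
    linarith
end
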